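/- For any pre-L-algebra X there is a bijection between the set of ideals of X and the set of congruences ∼ on X for which the quotient X/∼ is an L-algebra. -/

import Mathlib

class PreLAlgebra (X : Type*) extends Mul X, One X where
  mul_self : ∀ x : X, x * x = 1
  mul_unit : ∀ x : X, x * 1 = 1
  unit_mul : ∀ x : X, 1 * x = x
  cycl : ∀ x y z : X, (x * y) * (x * z) = (y * x) * (y * z)

class LAlgebra (X : Type*) extends PreLAlgebra X where
  antisymm : ∀ x y : X, x * y = 1 → y * x = 1 → x = y

def IsIdeal {X : Type*} [PreLAlgebra X] (I : Set X) : Prop :=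
  (1 : X) ∈ I ∧
  (∀ x y : X, x ∈ I → x * y ∈ I → y ∈ I) ∧
  (∀ x y : X, x ∈ I → (x * y) * y ∈ I) ∧
  (∀ x y : X, x ∈ I → y * x ∈ I) ∧
  (∀ x y : X, x ∈ I → y * (x * y) ∈ I)

def IsCongruence {X : Type*} [PreLAlgebra X] (r : X → X → Prop) : Prop :=
  Equivalence r ∧ ∀ x x' y y' : X, r x x' → r y y' → r (x * y) (x' * y')

/-!
An ideal `I` gives the relation `x ∼ y :⟺ x * y ∈ I ∧ y * x ∈ I`, and a congruence `∼` gives the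
class `{x | x ∼ 1}` of the unit. The cycloid law `(x * y) * (x * z) = (y * x) * (y * z)` makes
`x * y ∈ I` transitive and compatible with `*`, so the relation is a congruence, and its class of
`1` is `I` again because `x * 1 = 1` and `1 * x = x`. Conversely, the class of `1` of a
congruence is an ideal, and the relation it induces is `∼` exactly when `X/∼` is an L-algebra:
`x ∼ y` always forces `x * y ∼ y * y = 1`, and the L-algebra condition is the converse.
-/

open PreLAlgebra

section

variable {X : Type*} [PreLAlgebra X]

namespace IsIdeal

variable {I : Set X} (hI : IsIdeal I) {x y z : X}
include hI

theorem one_mem : (1 : X) ∈ I := hI.1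

theorem mem_of_mem_of_mul_mem (hx : x ∈ I) (hxy : x * y ∈ I) : y ∈ I := hI.2.1 x y hx hxy

theorem mul_mul_self_mem (hx : x ∈ I) : (x * y) * y ∈ I := hI.2.2.1 x y hx

theorem mul_mem_left (hx : x ∈ I) : y * x ∈ I := hI.2.2.2.1 x y hx

theorem mul_mul_mem (hx : x ∈ I) : y * (x * y) ∈ I := hI.2.2.2.2 x y hx

theorem mul_trans (hxy : x * y ∈ I) (hyz : y * z ∈ I) : x * z ∈ I := by
  have h : (y * x) * (y * z) ∈ I := hI.mul_mem_left hyz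
  rw [cycl] at h
  exact hI.mem_of_mem_of_mul_mem hxy h

theorem mul_mem_of_mul_mul_mem (hx : x ∈ I) (h : (x * y) * z ∈ I) : y * z ∈ I := by
  have h' : ((x * y) * y) * ((x * y) * z) ∈ I := hI.mul_mem_left h
  rw [cycl] at h'
  exact hI.mem_of_mem_of_mul_mem (hI.mul_mul_mem hx) h'

theorem mul_mul_mul_left (z : X) (h : x * y ∈ I) : (z * x) * (z * y) ∈ I := by
  rw [cycl]
  exact hI.mul_mem_left h

theorem mul_mul_mul_right (z : X) (hxy : x * y ∈ I) (hyx : y * x ∈ I) :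
    (x * z) * (y * z) ∈ I := by
  have h : ((y * x) * (y * z)) * (y * z) ∈ I := hI.mul_mul_self_mem hyx
  rw [cycl] at h
  exact hI.mul_mem_of_mul_mul_mem hxy h

end IsIdeal

def idealRel (I : Set X) (x y : X) : Prop := x * y ∈ I ∧ y * x ∈ I

theorem IsIdeal.isCongruence_idealRel {I : Set X} (hI : IsIdeal I) :
    IsCongruence (idealRel I) := by
  refine ⟨⟨fun x => ?_, fun h => ⟨h.2, h.1⟩, fun hxy hyz => ?_⟩, fun x x' y y' hx hy => ?_⟩
  · rw [idealRel, mul_self]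
    exact ⟨hI.one_mem, hI.one_mem⟩
  · exact ⟨hI.mul_trans hxy.1 hyz.1, hI.mul_trans hyz.2 hxy.2⟩
  · exact ⟨hI.mul_trans (hI.mul_mul_mul_left x hy.1) (hI.mul_mul_mul_right y' hx.1 hx.2),
      hI.mul_trans (hI.mul_mul_mul_left x' hy.2) (hI.mul_mul_mul_right y hx.2 hx.1)⟩

theorem IsIdeal.idealRel_one_iff {I : Set X} (hI : IsIdeal I) (x : X) :
    idealRel I x 1 ↔ x ∈ I := by
  rw [idealRel, mul_unit, unit_mul]
  exact ⟨And.right, fun hx => ⟨hI.one_mem, hx⟩⟩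

namespace IsCongruence

variable {r : X → X → Prop} (hr : IsCongruence r) {x y : X}
include hr

theorem rel_mul_one (h : r x y) : r (x * y) 1 := by
  simpa only [mul_self] using hr.2 x y y y h (hr.1.refl y)

theorem rel_mul_of_rel_one (hx : r x 1) (y : X) : r (x * y) y := by
  simpa only [unit_mul] using hr.2 x 1 y y hx (hr.1.refl y)

theorem isIdeal_setOf_rel_one : IsIdeal {x | r x 1} := by
  refine ⟨hr.1.refl 1, fun x y hx hxy => ?_, fun x y hx => ?_, fun x y hx => ?_,
    fun x y hx => ?_⟩
  · exact hr.1.trans (hr.1.symm (hr.rel_mul_of_rel_one hx y)) hxy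
  · exact hr.rel_mul_one (hr.rel_mul_of_rel_one hx y)
  · simpa only [mul_unit, Set.mem_ofPred_eq] using hr.2 y y x 1 (hr.1.refl y) hx
  · simpa only [mul_self, Set.mem_ofPred_eq] using
      hr.2 y y _ _ (hr.1.refl y) (hr.rel_mul_of_rel_one hx y)

theorem idealRel_setOf_rel_one_iff (hL : ∀ x y : X, r (x * y) 1 → r (y * x) 1 → r x y) :
    idealRel {x | r x 1} x y ↔ r x y :=
  ⟨fun h => hL x y h.1 h.2, fun h => ⟨hr.rel_mul_one h, hr.rel_mul_one (hr.1.symm h)⟩⟩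

end IsCongruence

variable (X) in
abbrev LAlgebraCongruence : Type _ :=
  {r : X → X → Prop // IsCongruence r ∧ ∀ x y : X, r (x * y) 1 → r (y * x) 1 → r x y}

variable (X) in
def idealEquivLAlgebraCongruence : {I : Set X // IsIdeal I} ≃ LAlgebraCongruence X where
  toFun I := ⟨idealRel I.1, I.2.isCongruence_idealRel, fun _ _ hxy hyx =>
    ⟨(I.2.idealRel_one_iff _).mp hxy, (I.2.idealRel_one_iff _).mp hyx⟩⟩
  invFun r := ⟨{x | r.1 x 1}, r.2.1.isIdeal_setOf_rel_one⟩
  left_inv I := Subtype.ext <| Set.ext I.2.idealRel_one_iff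
  right_inv r :=
    Subtype.ext <| funext₂ fun _ _ => propext (r.2.1.idealRel_setOf_rel_one_iff r.2.2)

end

theorem ideals_biject_with_lalgebra_congruences (X : Type*) [PreLAlgebra X] :
    Nonempty ({I : Set X // IsIdeal I} ≃
      {r : X → X → Prop // IsCongruence r ∧
        ∀ x y : X, r (x * y) 1 → r (y * x) 1 → r x y}) :=
  ⟨idealEquivLAlgebraCongruence X⟩
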